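/- arXiv:2412.20703 — 7 statements merged into one kernel-verified Lean document; each statement's English description precedes it below -/
import Mathlib

section
/- Under the weighted bottleneck Hamming distance objective, if the edge-length vector w̃ is an optimal solution of the shortest-path interdiction problem on a tree (i.e., w̃ minimizes max_{e∈E} c(e)·H(w̃(e),w(e)) subject to w̃(P_k) ≥ D for every root-leaf path P_k and w(e) ≤ w̃(e) ≤ u(e)), then the vector w* defined by w*(e) = u(e) if w̃(e) ≠ w(e) and w*(e) = w(e) otherwise is also an optimal solution. -/
open Finset

/-- if w̃ is optimal for (MCSPIT_BH), then w* (raising every modified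
edge to its upper bound and keeping unmodified edges at w) is also optimal. -/
theorem stmt_0 {α β : Type*} [DecidableEq α]
    (E : Finset α) (hE : E.Nonempty)
    (Y : Finset β) (hY : Y.Nonempty)
    (P : β → Finset α) (hP : ∀ t ∈ Y, P t ⊆ E)
    (w u c : α → ℝ) (hwu : ∀ e ∈ E, w e ≤ u e) (hc : ∀ e ∈ E, 0 < c e)
    (D : ℝ) (wt : α → ℝ)
    (hfeas : (∀ t ∈ Y, D ≤ ∑ e ∈ P t, wt e) ∧ ∀ e ∈ E, w e ≤ wt e ∧ wt e ≤ u e)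
    (hopt : ∀ w' : α → ℝ,
      ((∀ t ∈ Y, D ≤ ∑ e ∈ P t, w' e) ∧ ∀ e ∈ E, w e ≤ w' e ∧ w' e ≤ u e) →
      E.sup' hE (fun e => c e * (if wt e ≠ w e then 1 else 0)) ≤
        E.sup' hE (fun e => c e * (if w' e ≠ w e then 1 else 0))) :
    ((∀ t ∈ Y, D ≤ ∑ e ∈ P t, (fun e => if wt e ≠ w e then u e else w e) e) ∧
      ∀ e ∈ E, w e ≤ (fun e => if wt e ≠ w e then u e else w e) e ∧
        (fun e => if wt e ≠ w e then u e else w e) e ≤ u e) ∧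
    ∀ w' : α → ℝ,
      ((∀ t ∈ Y, D ≤ ∑ e ∈ P t, w' e) ∧ ∀ e ∈ E, w e ≤ w' e ∧ w' e ≤ u e) →
      E.sup' hE (fun e => c e *
          (if (fun e => if wt e ≠ w e then u e else w e) e ≠ w e then 1 else 0)) ≤
        E.sup' hE (fun e => c e * (if w' e ≠ w e then 1 else 0)) := by
  obtain ⟨hfD, hfb⟩ := hfeas
  -- on E, wt e ≤ w* e
  have hge : ∀ e ∈ E, wt e ≤ (if wt e ≠ w e then u e else w e) := by
    intro e he
    by_cases h : wt e = w e
    · simp [h]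
    · simp [h, (hfb e he).2]
  have hind : ∀ e ∈ E,
      ((if (if wt e ≠ w e then u e else w e) ≠ w e then (1:ℝ) else 0)
        = if wt e ≠ w e then 1 else 0) := by
    intro e he
    by_cases h : wt e = w e
    · simp [h]
    · have hu : u e ≠ w e := by
        intro hu
        exact h (le_antisymm (hu ▸ (hfb e he).2) (hfb e he).1)
      simp [h, hu]
  constructor
  · constructor
    · intro t ht
      refine le_trans (hfD t ht) (Finset.sum_le_sum ?_)
      intro e he
      exact hge e (hP t ht he)
    · intro e he
      by_cases h : wt e = w e
      · simp [h, hwu e he]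
      · simp [h, le_refl, hwu e he]
  · intro w' hw'
    have := hopt w' hw'
    refine le_trans (le_of_eq ?_) this
    apply Finset.sup'_congr hE rfl
    intro e he
    simp only
    rw [hind e he]
end

section
/- Given a budget M ≥ 0, the weight vector ŵ defined by ŵ(e) = u(e) if c(e) ≤ M and ŵ(e) = w(e) if c(e) > M is an optimal solution of the budget-constrained path-length maximization problem: it maximizes min_{t_k∈Y} ŵ(P_k) over all vectors ŵ satisfying max_{e∈E} c(e)·H(ŵ(e),w(e)) ≤ M and w(e) ≤ ŵ(e) ≤ u(e) for all e. -/
open Finset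

/-- the greedy vector ŵ(e) = u(e) if c(e) ≤ M else w(e) is an optimal
solution of (MSPIT_BH). -/
theorem stmt_1 {α β : Type*} [DecidableEq α]
    (E : Finset α) (hE : E.Nonempty)
    (Y : Finset β) (hY : Y.Nonempty)
    (P : β → Finset α) (hP : ∀ t ∈ Y, P t ⊆ E)
    (w u c : α → ℝ) (hwu : ∀ e ∈ E, w e ≤ u e) (hc : ∀ e ∈ E, 0 < c e)
    (M : ℝ) (hM : 0 ≤ M) :
    ((E.sup' hE (fun e => c e *
        (if (fun e => if c e ≤ M then u e else w e) e ≠ w e then 1 else 0)) ≤ M) ∧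
      (∀ e ∈ E, w e ≤ (fun e => if c e ≤ M then u e else w e) e ∧
        (fun e => if c e ≤ M then u e else w e) e ≤ u e)) ∧
    ∀ w' : α → ℝ,
      ((E.sup' hE (fun e => c e * (if w' e ≠ w e then 1 else 0)) ≤ M) ∧
        (∀ e ∈ E, w e ≤ w' e ∧ w' e ≤ u e)) →
      Y.inf' hY (fun t => ∑ e ∈ P t, w' e) ≤
        Y.inf' hY (fun t => ∑ e ∈ P t, (if c e ≤ M then u e else w e)) := by

  constructor
  · constructor
    · apply Finset.sup'_le
      intro e he
      by_cases h2 : c e ≤ M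
      · split_ifs with h1
        · simpa using h2
        · simp [hM]
      · simp [h2, hM]
    · intro e he
      simp only
      split_ifs with h
      · exact ⟨hwu e he, le_refl _⟩
      · exact ⟨le_refl _, hwu e he⟩
  · rintro w' ⟨hsup, hb⟩
    have key : ∀ e ∈ E, w' e ≤ if c e ≤ M then u e else w e := by
      intro e he
      split_ifs with h
      · exact (hb e he).2
      · by_cases hne : w' e = w e
        · exact le_of_eq hne
        · exfalso
          have := le_trans (Finset.le_sup' (fun e => c e * (if w' e ≠ w e then 1 else 0)) he) hsup
          simp [hne] at this
          exact h this
    apply Finset.le_inf'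
    intro t ht
    refine le_trans (Finset.inf'_le _ ht) ?_
    exact Finset.sum_le_sum fun e he => key e (hP t ht he)
end

section
/- (Second necessity condition of the feasibility characterization) Suppose w̃ satisfies l(e) ≤ w̃(e) ≤ u(e) for all e, w̃(e) = w(e) for e ∉ E_k, w̃(P_i) ≥ D for all leaves t_i, and w̃(P₀) = D. Then for every leaf t_i: l(P₀ ∩ E_k) + w(P₀ \ E_k) ≤ l(P_i ∩ P₀ ∩ E_k) + u((P_i \ P₀) ∩ E_k) + w(P_i \ E_k). -/
open Finset

/-- necessity, second condition. If w̃ is feasible for (RIOVSPT_BH)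
and only modifies edges of E_k, then for every leaf t_i:
l(P₀ ∩ E_k) + w(P₀ \ E_k) ≤ l(P_i ∩ P₀ ∩ E_k) + u((P_i \ P₀) ∩ E_k) + w(P_i \ E_k). -/
theorem stmt_7 {α β : Type*} [DecidableEq α]
    (E : Finset α)
    (Y : Finset β) (hY : Y.Nonempty)
    (P : β → Finset α) (hP : ∀ t ∈ Y, P t ⊆ E)
    (t0 : β) (ht0 : t0 ∈ Y)
    (w l u : α → ℝ) (hlw : ∀ e ∈ E, l e ≤ w e) (hwu : ∀ e ∈ E, w e ≤ u e)
    (Ek : Finset α) (D : ℝ) (wt : α → ℝ)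
    (hbounds : ∀ e ∈ E, l e ≤ wt e ∧ wt e ≤ u e)
    (hoff : ∀ e ∈ E, e ∉ Ek → wt e = w e)
    (hge : ∀ t ∈ Y, D ≤ ∑ e ∈ P t, wt e)
    (heq : ∑ e ∈ P t0, wt e = D) :
    ∀ t ∈ Y,
      (∑ e ∈ P t0 ∩ Ek, l e) + (∑ e ∈ P t0 \ Ek, w e) ≤
        (∑ e ∈ P t ∩ P t0 ∩ Ek, l e) + (∑ e ∈ (P t \ P t0) ∩ Ek, u e) +
          (∑ e ∈ P t \ Ek, w e) := by
  intro t ht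
  have hPt := hP t ht
  have hP0 := hP t0 ht0
  have key : ∑ e ∈ P t0, wt e ≤ ∑ e ∈ P t, wt e := heq ▸ hge t ht
  -- split sums over A ∩ Ek into (A ∩ B ∩ Ek) + ((A \ B) ∩ Ek)
  have hsplit : ∀ (A B : Finset α) (f : α → ℝ),
      ∑ e ∈ A ∩ Ek, f e = ∑ e ∈ B ∩ A ∩ Ek, f e + ∑ e ∈ (A \ B) ∩ Ek, f e := by
    intro A B f
    have h1 : B ∩ A ∩ Ek = (A ∩ Ek) ∩ B := by ext e; simp; tauto
    have h2 : (A \ B) ∩ Ek = (A ∩ Ek) \ B := by ext e; simp; tauto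
    rw [h1, h2, Finset.sum_inter_add_sum_sdiff]
  -- wt = w outside Ek
  have hw0 : ∑ e ∈ P t0 \ Ek, wt e = ∑ e ∈ P t0 \ Ek, w e := by
    apply Finset.sum_congr rfl
    intro e he
    rw [Finset.mem_sdiff] at he
    exact hoff e (hP0 he.1) he.2
  have hwt : ∑ e ∈ P t \ Ek, wt e = ∑ e ∈ P t \ Ek, w e := by
    apply Finset.sum_congr rfl
    intro e he
    rw [Finset.mem_sdiff] at he
    exact hoff e (hPt he.1) he.2
  have d0 : ∑ e ∈ P t0, wt e =
      ∑ e ∈ P t ∩ P t0 ∩ Ek, wt e + ∑ e ∈ (P t0 \ P t) ∩ Ek, wt e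
        + ∑ e ∈ P t0 \ Ek, w e := by
    rw [← hw0, ← hsplit (P t0) (P t) wt, Finset.sum_inter_add_sum_sdiff]
  have dt : ∑ e ∈ P t, wt e =
      ∑ e ∈ P t0 ∩ P t ∩ Ek, wt e + ∑ e ∈ (P t \ P t0) ∩ Ek, wt e
        + ∑ e ∈ P t \ Ek, w e := by
    rw [← hwt, ← hsplit (P t) (P t0) wt, Finset.sum_inter_add_sum_sdiff]
  have hcomm : P t0 ∩ P t ∩ Ek = P t ∩ P t0 ∩ Ek := by
    rw [Finset.inter_comm (P t0) (P t)]
  rw [hcomm] at dt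
  have dl : ∑ e ∈ P t0 ∩ Ek, l e =
      ∑ e ∈ P t ∩ P t0 ∩ Ek, l e + ∑ e ∈ (P t0 \ P t) ∩ Ek, l e :=
    hsplit (P t0) (P t) l
  have hlA : ∑ e ∈ (P t0 \ P t) ∩ Ek, l e ≤ ∑ e ∈ (P t0 \ P t) ∩ Ek, wt e := by
    apply Finset.sum_le_sum
    intro e he
    rw [Finset.mem_inter, Finset.mem_sdiff] at he
    exact (hbounds e (hP0 he.1.1)).1
  have huB : ∑ e ∈ (P t \ P t0) ∩ Ek, wt e ≤ ∑ e ∈ (P t \ P t0) ∩ Ek, u e := by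
    apply Finset.sum_le_sum
    intro e he
    rw [Finset.mem_inter, Finset.mem_sdiff] at he
    exact (hbounds e (hPt he.1.1)).2
  rw [d0, dt] at key
  linarith
end

section
/- (Monotonicity of feasibility in the budget) Let E_j ⊆ E_k be two subsets of edges. If the feasibility conditions (1) l(P₀ ∩ E_j) + w(P₀ \ E_j) ≤ D ≤ u(P_i ∩ E_j) + w(P_i \ E_j) for all leaves t_i, and (2) l(P₀ ∩ E_j) + w(P₀ \ E_j) ≤ l(P_i ∩ P₀ ∩ E_j) + u((P_i \ P₀) ∩ E_j) + w(P_i \ E_j) for all leaves t_i hold for E_j, then they also hold for E_k. -/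
open Finset

lemma sum_split_inter {α : Type*} [DecidableEq α] (Ej Ek S : Finset α)
    (h : Ej ⊆ Ek) (f : α → ℝ) :
    ∑ e ∈ S ∩ Ek, f e = ∑ e ∈ S ∩ Ej, f e + ∑ e ∈ S ∩ (Ek \ Ej), f e := by
  rw [← Finset.sum_union]
  · congr 1
    ext x
    simp only [mem_inter, mem_union, mem_sdiff]
    constructor
    · intro ⟨hxS, hxk⟩
      by_cases hj : x ∈ Ej
      · exact Or.inl ⟨hxS, hj⟩
      · exact Or.inr ⟨hxS, hxk, hj⟩
    · rintro (⟨hxS, hj⟩ | ⟨hxS, hk, _⟩)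
      · exact ⟨hxS, h hj⟩
      · exact ⟨hxS, hk⟩
  · rw [Finset.disjoint_left]
    intro x hx hx'
    simp only [mem_inter, mem_sdiff] at hx hx'
    exact hx'.2.2 hx.2

lemma sum_split_sdiff {α : Type*} [DecidableEq α] (Ej Ek S : Finset α)
    (h : Ej ⊆ Ek) (f : α → ℝ) :
    ∑ e ∈ S \ Ej, f e = ∑ e ∈ S \ Ek, f e + ∑ e ∈ S ∩ (Ek \ Ej), f e := by
  rw [← Finset.sum_union]
  · congr 1
    ext x
    simp only [mem_sdiff, mem_union, mem_inter]
    constructor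
    · intro ⟨hxS, hj⟩
      by_cases hk : x ∈ Ek
      · exact Or.inr ⟨hxS, hk, hj⟩
      · exact Or.inl ⟨hxS, hk⟩
    · rintro (⟨hxS, hk⟩ | ⟨hxS, _, hj⟩)
      · exact ⟨hxS, fun hx => hk (h hx)⟩
      · exact ⟨hxS, hj⟩
  · rw [Finset.disjoint_left]
    intro x hx hx'
    simp only [mem_sdiff, mem_inter] at hx hx'
    exact hx.2 hx'.2.1

/-- monotonicity of the feasibility conditions in the modifiable
edge set: if they hold for E_j ⊆ E_k, they hold for E_k. -/
theorem stmt_9 {α β : Type*} [DecidableEq α]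
    (E : Finset α)
    (Y : Finset β) (hY : Y.Nonempty)
    (P : β → Finset α) (hP : ∀ t ∈ Y, P t ⊆ E)
    (t0 : β) (ht0 : t0 ∈ Y)
    (w l u : α → ℝ) (hlw : ∀ e ∈ E, l e ≤ w e) (hwu : ∀ e ∈ E, w e ≤ u e)
    (Ej Ek : Finset α) (hjk : Ej ⊆ Ek) (hEk : Ek ⊆ E) (D : ℝ)
    (hcond1 : ∀ t ∈ Y,
      (∑ e ∈ P t0 ∩ Ej, l e) + (∑ e ∈ P t0 \ Ej, w e) ≤ D ∧
      D ≤ (∑ e ∈ P t ∩ Ej, u e) + (∑ e ∈ P t \ Ej, w e))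
    (hcond2 : ∀ t ∈ Y,
      (∑ e ∈ P t0 ∩ Ej, l e) + (∑ e ∈ P t0 \ Ej, w e) ≤
        (∑ e ∈ P t ∩ P t0 ∩ Ej, l e) + (∑ e ∈ (P t \ P t0) ∩ Ej, u e) +
          (∑ e ∈ P t \ Ej, w e)) :
    (∀ t ∈ Y,
      (∑ e ∈ P t0 ∩ Ek, l e) + (∑ e ∈ P t0 \ Ek, w e) ≤ D ∧
      D ≤ (∑ e ∈ P t ∩ Ek, u e) + (∑ e ∈ P t \ Ek, w e)) ∧
    (∀ t ∈ Y,
      (∑ e ∈ P t0 ∩ Ek, l e) + (∑ e ∈ P t0 \ Ek, w e) ≤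
        (∑ e ∈ P t ∩ P t0 ∩ Ek, l e) + (∑ e ∈ (P t \ P t0) ∩ Ek, u e) +
          (∑ e ∈ P t \ Ek, w e)) := by
  -- On any subset of E, pointwise l ≤ w ≤ u gives sum inequalities.
  have hsub : ∀ (S : Finset α) (f g : α → ℝ), (∀ e ∈ E, f e ≤ g e) → S ⊆ E →
      ∑ e ∈ S, f e ≤ ∑ e ∈ S, g e := by
    intro S f g hfg hS
    exact Finset.sum_le_sum fun e he => hfg e (hS he)
  have hΔE : Ek \ Ej ⊆ E := fun x hx => hEk (mem_sdiff.mp hx).1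
  -- key: the LHS decreases when passing from Ej to Ek
  have hLHSle : (∑ e ∈ P t0 ∩ Ek, l e) + (∑ e ∈ P t0 \ Ek, w e) ≤
      (∑ e ∈ P t0 ∩ Ej, l e) + (∑ e ∈ P t0 \ Ej, w e) := by
    rw [sum_split_inter Ej Ek _ hjk, sum_split_sdiff Ej Ek _ hjk]
    have := hsub (P t0 ∩ (Ek \ Ej)) l w hlw
      (fun x hx => hΔE (mem_inter.mp hx).2)
    linarith [this]
  constructor
  · intro t ht
    obtain ⟨h1, h2⟩ := hcond1 t ht
    constructor
    · linarith
    · have e1 := sum_split_inter Ej Ek (P t) hjk u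
      have e2 := sum_split_sdiff Ej Ek (P t) hjk w
      have := hsub (P t ∩ (Ek \ Ej)) w u hwu
        (fun x hx => hΔE (mem_inter.mp hx).2)
      linarith
  · intro t ht
    have h2 := hcond2 t ht
    -- decompositions
    have e1 := sum_split_inter Ej Ek (P t0) hjk l
    have e2 := sum_split_sdiff Ej Ek (P t0) hjk w
    have e3 := sum_split_inter Ej Ek (P t ∩ P t0) hjk l
    have e4 := sum_split_inter Ej Ek (P t \ P t0) hjk u
    have e5 := sum_split_sdiff Ej Ek (P t) hjk w
    -- decompose P t ∩ (Ek \ Ej) into the part in P t0 and the part not in P t0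
    have hPtsplit : ∑ e ∈ P t ∩ (Ek \ Ej), w e =
        ∑ e ∈ (P t ∩ P t0) ∩ (Ek \ Ej), w e + ∑ e ∈ (P t \ P t0) ∩ (Ek \ Ej), w e := by
      rw [← Finset.sum_union]
      · congr 1
        ext x
        simp only [mem_inter, mem_union, mem_sdiff]
        tauto
      · rw [Finset.disjoint_left]
        intro x hx hx'
        simp only [mem_inter, mem_sdiff] at hx hx'
        exact hx'.1.2 hx.1.2
    -- B ≤ A0 : sum over the smaller set of (w - l)
    have hBA : ∑ e ∈ (P t ∩ P t0) ∩ (Ek \ Ej), (w e - l e) ≤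
        ∑ e ∈ P t0 ∩ (Ek \ Ej), (w e - l e) := by
      apply Finset.sum_le_sum_of_subset_of_nonneg
      · intro x hx
        simp only [mem_inter, mem_sdiff] at hx ⊢
        exact ⟨hx.1.2, hx.2⟩
      · intro e he _
        have : e ∈ E := hΔE (mem_inter.mp he).2
        linarith [hlw e this]
    rw [Finset.sum_sub_distrib, Finset.sum_sub_distrib] at hBA
    have hC : ∑ e ∈ (P t \ P t0) ∩ (Ek \ Ej), w e ≤
        ∑ e ∈ (P t \ P t0) ∩ (Ek \ Ej), u e :=
      hsub _ w u hwu (fun x hx => hΔE (mem_inter.mp hx).2)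
    linarith
end

section
/- Let c₁ < c₂ < ... < c_{n*} be the distinct cost values of the edges, and let D_j = min_{t_k∈Y} ŵ^j(P_k) where ŵ^j(e) = u(e) if c(e) ≤ c_j, else w(e). Then the sequence D_1 ≤ D_2 ≤ ... ≤ D_{n*} is non-decreasing, and if D(w) < D ≤ D_{n*}, then the minimum of {c_j : D_j ≥ D} is the optimal objective value of (MCSPIT_BH) for target D. -/
open Finset

/-- with distinct sorted cost values c₁ < ⋯ < c_{n*}, the greedy
shortest distances D_j are non-decreasing, and if D(w) < D ≤ D_{n*} then
min {c_j : D_j ≥ D} is the optimal objective value of (MCSPIT_BH). -/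
theorem stmt_14 {α β : Type*} [DecidableEq α]
    (E : Finset α) (hE : E.Nonempty)
    (Y : Finset β) (hY : Y.Nonempty)
    (P : β → Finset α) (hP : ∀ t ∈ Y, P t ⊆ E)
    (w u c : α → ℝ) (hwu : ∀ e ∈ E, w e ≤ u e) (hc : ∀ e ∈ E, 0 < c e)
    (D : ℝ)
    (m : ℕ) (cs : Fin (m + 1) → ℝ) (hmono : StrictMono cs)
    (hvals : ∀ e ∈ E, ∃ j, c e = cs j)
    (hsurj : ∀ j, ∃ e ∈ E, c e = cs j)
    (Dseq : Fin (m + 1) → ℝ)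
    (hDseq : ∀ j, Dseq j =
      Y.inf' hY (fun t => ∑ e ∈ P t, (if c e ≤ cs j then u e else w e))) :
    (∀ i j : Fin (m + 1), i ≤ j → Dseq i ≤ Dseq j) ∧
    (Y.inf' hY (fun t => ∑ e ∈ P t, w e) < D → D ≤ Dseq (Fin.last m) →
      IsLeast
        {x : ℝ | ∃ wb : α → ℝ,
          ((∀ t ∈ Y, D ≤ ∑ e ∈ P t, wb e) ∧ ∀ e ∈ E, w e ≤ wb e ∧ wb e ≤ u e) ∧
          E.sup' hE (fun e => c e * (if wb e ≠ w e then 1 else 0)) = x}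
        (sInf {x : ℝ | ∃ j, cs j = x ∧ D ≤ Dseq j})) := by
  constructor
  · intro i j hij
    rw [hDseq, hDseq]
    apply le_inf'
    intro t ht
    refine (inf'_le _ ht).trans (Finset.sum_le_sum ?_)
    intro e he
    by_cases h1 : c e ≤ cs i
    · rw [if_pos h1, if_pos (h1.trans (hmono.monotone hij))]
    · rw [if_neg h1]
      by_cases h2 : c e ≤ cs j
      · rw [if_pos h2]; exact hwu e (hP t ht he)
      · rw [if_neg h2]
  · intro hDw hDlast
    set S' : Finset (Fin (m + 1)) := univ.filter (fun j => D ≤ Dseq j) with hS'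
    have hS'ne : S'.Nonempty := ⟨Fin.last m, by simp [hS', hDlast]⟩
    set j₀ := S'.min' hS'ne with hj₀
    have hj₀mem : D ≤ Dseq j₀ := by
      have := S'.min'_mem hS'ne
      simp only [hS', mem_filter] at this
      exact this.2
    have hj₀min : ∀ j, D ≤ Dseq j → j₀ ≤ j := fun j hj =>
      min'_le _ _ (by simp [hS', hj])
    have hcs0 : 0 < cs j₀ := by
      obtain ⟨e, he, hce⟩ := hsurj j₀
      rw [← hce]; exact hc e he
    -- lower bound lemma
    have hlb : ∀ wb : α → ℝ, (∀ t ∈ Y, D ≤ ∑ e ∈ P t, wb e) →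
        (∀ e ∈ E, w e ≤ wb e ∧ wb e ≤ u e) →
        cs j₀ ≤ E.sup' hE (fun e => c e * (if wb e ≠ w e then 1 else 0)) := by
      intro wb hfeas hbound
      by_contra hlt
      push_neg at hlt
      have hkey : ∀ e ∈ E, wb e ≤ (if c e < cs j₀ then u e else w e) := by
        intro e he
        by_cases hne : wb e ≠ w e
        · have hce : c e ≤ E.sup' hE (fun e => c e * (if wb e ≠ w e then 1 else 0)) := by
            have h := le_sup' (f := fun e => c e * (if wb e ≠ w e then 1 else 0)) he
            refine Eq.trans_le ?_ h; simp [hne]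
          rw [if_pos (lt_of_le_of_lt hce hlt)]
          exact (hbound e he).2
        · push_neg at hne
          rw [hne]
          split
          · exact hwu e he
          · exact le_refl _
      rcases Fin.eq_zero_or_eq_succ j₀ with h0 | ⟨i, hi⟩
      · have hwb : ∀ e ∈ E, wb e ≤ w e := by
          intro e he
          have hk := hkey e he
          obtain ⟨j, hj⟩ := hvals e he
          rw [if_neg (by
            rw [h0, hj]
            exact not_lt.2 (hmono.monotone (Fin.zero_le j)))] at hk
          exact hk
        have hcon : D ≤ Y.inf' hY (fun t => ∑ e ∈ P t, w e) := by
          apply le_inf'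
          intro t ht
          exact (hfeas t ht).trans (Finset.sum_le_sum fun e he => hwb e (hP t ht he))
        exact absurd (lt_of_le_of_lt hcon hDw) (lt_irrefl D)
      · have hlt' : Dseq i.castSucc < D := by
          by_contra h
          push_neg at h
          have hle := hj₀min _ h
          rw [hi] at hle
          exact absurd hle (not_le.2 Fin.castSucc_lt_succ)
        have hge : D ≤ Dseq i.castSucc := by
          rw [hDseq]
          apply le_inf'
          intro t ht
          refine (hfeas t ht).trans (Finset.sum_le_sum fun e he => ?_)
          have h1 := hkey e (hP t ht he)
          by_cases h2 : c e ≤ cs i.castSucc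
          · rw [if_pos h2]
            refine le_trans h1 ?_
            split
            · exact le_refl _
            · exact hwu e (hP t ht he)
          · rw [if_neg h2]
            have hnl : ¬ c e < cs j₀ := by
              intro hc'
              obtain ⟨j, hj⟩ := hvals e (hP t ht he)
              rw [hj] at hc' h2
              have hjlt : j < j₀ := hmono.lt_iff_lt.1 hc'
              rw [hi] at hjlt
              exact h2 (hmono.monotone (Fin.le_castSucc_iff.2 hjlt))
            rw [if_neg hnl] at h1
            exact h1
        linarith
    -- optimal solution
    set wb₀ : α → ℝ := fun e => if c e ≤ cs j₀ then u e else w e with hwb₀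
    have hfeas₀ : ∀ t ∈ Y, D ≤ ∑ e ∈ P t, wb₀ e := by
      intro t ht
      refine hj₀mem.trans ?_
      rw [hDseq]
      exact inf'_le _ ht
    have hbnd₀ : ∀ e ∈ E, w e ≤ wb₀ e ∧ wb₀ e ≤ u e := by
      intro e he
      constructor <;> simp only [hwb₀] <;> split <;>
        first | exact hwu e he | exact le_refl _
    have hsup₀ : E.sup' hE (fun e => c e * (if wb₀ e ≠ w e then 1 else 0)) = cs j₀ := by
      apply le_antisymm
      · apply sup'_le
        intro e he
        by_cases hne : wb₀ e ≠ w e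
        · rw [if_pos hne, mul_one]
          by_contra hcc
          push_neg at hcc
          exact hne (by simp [hwb₀, not_le.2 hcc])
        · rw [if_neg hne, mul_zero]
          exact hcs0.le
      · exact hlb wb₀ hfeas₀ hbnd₀
    have hSinf : sInf {x : ℝ | ∃ j, cs j = x ∧ D ≤ Dseq j} = cs j₀ := by
      apply IsLeast.csInf_eq
      constructor
      · exact ⟨j₀, rfl, hj₀mem⟩
      · rintro x ⟨j, rfl, hj⟩
        exact hmono.monotone (hj₀min j hj)
    rw [hSinf]
    constructor
    · exact ⟨wb₀, ⟨hfeas₀, hbnd₀⟩, hsup₀⟩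
    · rintro x ⟨wb, ⟨hfeas, hbnd⟩, rfl⟩
      exact hlb wb hfeas hbnd
end

section
/- (Infeasibility test for the largest cost implies global infeasibility) If the two feasibility conditions of Theorem 1 fail for E_k = E (i.e., with all edges modifiable), then the problem (RIOVSPT_BH) has no feasible solution: there is no w̃ with l ≤ w̃ ≤ u, w̃(P_i) ≥ D for all leaves t_i, and w̃(P₀) = D. -/
open Finset

/-- if the feasibility conditions fail with all edges modifiable
(E' = E), then (RIOVSPT_BH) has no feasible solution. -/
theorem stmt_17 {α β : Type*} [DecidableEq α]
    (E : Finset α)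
    (Y : Finset β) (hY : Y.Nonempty)
    (P : β → Finset α) (hP : ∀ t ∈ Y, P t ⊆ E)
    (t0 : β) (ht0 : t0 ∈ Y)
    (w l u : α → ℝ) (hlw : ∀ e ∈ E, l e ≤ w e) (hwu : ∀ e ∈ E, w e ≤ u e)
    (D : ℝ)
    (hfail : ¬ ((∀ t ∈ Y, (∑ e ∈ P t0, l e) ≤ D ∧ D ≤ ∑ e ∈ P t, u e) ∧
      (∀ t ∈ Y, (∑ e ∈ P t0, l e) ≤
        (∑ e ∈ P t ∩ P t0, l e) + (∑ e ∈ P t \ P t0, u e)))) :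
    ¬ ∃ wt : α → ℝ,
      (∀ e ∈ E, l e ≤ wt e ∧ wt e ≤ u e) ∧
      (∀ t ∈ Y, D ≤ ∑ e ∈ P t, wt e) ∧
      (∑ e ∈ P t0, wt e = D) := by
  rintro ⟨wt, hb, hge, heq⟩
  apply hfail
  have hl0 : (∑ e ∈ P t0, l e) ≤ D := by
    rw [← heq]
    exact Finset.sum_le_sum fun e he => (hb e (hP t0 ht0 he)).1
  constructor
  · intro t ht
    refine ⟨hl0, le_trans (hge t ht) ?_⟩
    exact Finset.sum_le_sum fun e he => (hb e (hP t ht he)).2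
  · intro t ht
    have e1 : ∑ e ∈ P t0 ∩ P t, l e + ∑ e ∈ P t0 \ P t, l e = ∑ e ∈ P t0, l e :=
      Finset.sum_inter_add_sum_sdiff _ _ _
    have e2 : ∑ e ∈ P t0 ∩ P t, wt e + ∑ e ∈ P t0 \ P t, wt e = ∑ e ∈ P t0, wt e :=
      Finset.sum_inter_add_sum_sdiff _ _ _
    have e3 : ∑ e ∈ P t ∩ P t0, wt e + ∑ e ∈ P t \ P t0, wt e = ∑ e ∈ P t, wt e :=
      Finset.sum_inter_add_sum_sdiff _ _ _
    have ec : P t0 ∩ P t = P t ∩ P t0 := Finset.inter_comm _ _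
    have ecl : ∑ e ∈ P t0 ∩ P t, l e = ∑ e ∈ P t ∩ P t0, l e := by rw [ec]
    have ecw : ∑ e ∈ P t0 ∩ P t, wt e = ∑ e ∈ P t ∩ P t0, wt e := by rw [ec]
    have h1 : ∑ e ∈ P t0 \ P t, l e ≤ ∑ e ∈ P t0 \ P t, wt e :=
      Finset.sum_le_sum fun e he => (hb e (hP t0 ht0 (Finset.mem_sdiff.mp he).1)).1
    have h2 : ∑ e ∈ P t \ P t0, wt e ≤ ∑ e ∈ P t \ P t0, u e :=
      Finset.sum_le_sum fun e he => (hb e (hP t ht (Finset.mem_sdiff.mp he).1)).2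
    have h3 : D ≤ ∑ e ∈ P t, wt e := hge t ht
    linarith [heq]
end

section
/- (Exchange argument on intersecting paths) Let w̃ be feasible for (RIOVSPT_BH) and let t' be a leaf with P_{t'} ∩ P₀ ≠ ∅. Write E' = {e : w̃(e) ≠ w(e)}. If u((P_{t'} \ P₀) ∩ E') + w((P_{t'} \ P₀) \ E') < l((P₀ \ P_{t'}) ∩ E') + w((P₀ \ P_{t'}) \ E'), then w̃(P_{t'}) < w̃(P₀) = D, contradicting feasibility; hence l((P₀ \ P_{t'}) ∩ E') + w((P₀ \ P_{t'}) \ E') ≤ u((P_{t'} \ P₀) ∩ E') + w((P_{t'} \ P₀) \ E'). -/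
open Finset

/-- exchange inequality on intersecting paths. For w̃ feasible for
(RIOVSPT_BH) and a leaf t' with P_{t'} ∩ P₀ ≠ ∅, with E' = {e : w̃(e) ≠ w(e)}:
l((P₀ \ P_{t'}) ∩ E') + w((P₀ \ P_{t'}) \ E') ≤
u((P_{t'} \ P₀) ∩ E') + w((P_{t'} \ P₀) \ E'). -/
theorem stmt_19 {α β : Type*} [DecidableEq α]
    (E : Finset α)
    (Y : Finset β) (hY : Y.Nonempty)
    (P : β → Finset α) (hP : ∀ t ∈ Y, P t ⊆ E)
    (t0 : β) (ht0 : t0 ∈ Y)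
    (w l u : α → ℝ) (hlw : ∀ e ∈ E, l e ≤ w e) (hwu : ∀ e ∈ E, w e ≤ u e)
    (D : ℝ) (wt : α → ℝ)
    (hbounds : ∀ e ∈ E, l e ≤ wt e ∧ wt e ≤ u e)
    (hge : ∀ t ∈ Y, D ≤ ∑ e ∈ P t, wt e)
    (heq : ∑ e ∈ P t0, wt e = D)
    (t' : β) (ht' : t' ∈ Y) (hmeet : (P t' ∩ P t0).Nonempty) :
    (∑ e ∈ (P t0 \ P t').filter (fun e => wt e ≠ w e), l e) +
      (∑ e ∈ (P t0 \ P t').filter (fun e => ¬ wt e ≠ w e), w e) ≤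
    (∑ e ∈ (P t' \ P t0).filter (fun e => wt e ≠ w e), u e) +
      (∑ e ∈ (P t' \ P t0).filter (fun e => ¬ wt e ≠ w e), w e) := by
  have key : ∀ (S : Finset α), S ⊆ E →
      ((∑ e ∈ S.filter (fun e => wt e ≠ w e), l e) +
        (∑ e ∈ S.filter (fun e => ¬ wt e ≠ w e), w e) ≤ ∑ e ∈ S, wt e ∧
       ∑ e ∈ S, wt e ≤ (∑ e ∈ S.filter (fun e => wt e ≠ w e), u e) +
        (∑ e ∈ S.filter (fun e => ¬ wt e ≠ w e), w e)) := by
    intro S hS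
    have hsplit : ∑ e ∈ S, wt e =
        (∑ e ∈ S.filter (fun e => wt e ≠ w e), wt e) +
        (∑ e ∈ S.filter (fun e => ¬ wt e ≠ w e), wt e) :=
      (Finset.sum_filter_add_sum_filter_not S _ wt).symm
    constructor
    · rw [hsplit]
      gcongr with e he e he
      · exact (hbounds e (hS (Finset.mem_filter.mp he).1)).1
      · have := (Finset.mem_filter.mp he).2
        push_neg at this; rw [this]
    · rw [hsplit]
      gcongr with e he e he
      · exact (hbounds e (hS (Finset.mem_filter.mp he).1)).2
      · have := (Finset.mem_filter.mp he).2
        push_neg at this; rw [this]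
  have h0 : P t0 \ P t' ⊆ E := (Finset.sdiff_subset).trans (hP t0 ht0)
  have h1 : P t' \ P t0 ⊆ E := (Finset.sdiff_subset).trans (hP t' ht')
  have hmid : ∑ e ∈ P t0 \ P t', wt e ≤ ∑ e ∈ P t' \ P t0, wt e := by
    have e0 : ∑ e ∈ P t0 ∩ P t', wt e + ∑ e ∈ P t0 \ P t', wt e = ∑ e ∈ P t0, wt e :=
      Finset.sum_inter_add_sum_sdiff _ _ _
    have e1 : ∑ e ∈ P t' ∩ P t0, wt e + ∑ e ∈ P t' \ P t0, wt e = ∑ e ∈ P t', wt e :=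
      Finset.sum_inter_add_sum_sdiff _ _ _
    have hle : ∑ e ∈ P t0, wt e ≤ ∑ e ∈ P t', wt e := heq ▸ hge t' ht'
    rw [Finset.inter_comm] at e1
    linarith
  linarith [(key _ h0).1, (key _ h1).2]
end
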